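/- Let ψ: ℝ³ → ℝ be a smooth compactly supported function, let i, j ∈ {1,2,3} and let T > 0. Define for r > 0: F(r) := r³ · ∫_{S²} y_i y_j · ψ(r y) dσ(y) and G(r) := r · ∫_{S²} ψ(r y) dσ(y) if i = j (and G(r) := 0 if i ≠ j). Then the improper integral ∫₀^{T} (1/r) · d/dr [ (1/r) · F'(r) − G(r) ] dr converges; that is, the function r ↦ (1/r) · d/dr[(1/r) F'(r) − G(r)] is integrable on (0, T]. -/

import Mathlib

open MeasureTheory Real Filter

noncomputable section

abbrev E3 := EuclideanSpace ℝ (Fin 3)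

/-- `F(r) = r³ ∫_{S²} yᵢ yⱼ ψ(r y) dσ(y)`. -/
def Ffun (ψ : E3 → ℝ) (i j : Fin 3) (r : ℝ) : ℝ :=
  r ^ 3 * ∫ y in Metric.sphere (0 : E3) 1, y i * y j * ψ (r • y) ∂(μH[2])

/-- `G(r) = r ∫_{S²} ψ(r y) dσ(y)` if `i = j`, else `0`. -/
def Gfun (ψ : E3 → ℝ) (i j : Fin 3) (r : ℝ) : ℝ :=
  if i = j then r * ∫ y in Metric.sphere (0 : E3) 1, ψ (r • y) ∂(μH[2]) else 0

/-! ### Auxiliary material -/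

namespace SigmaAux

/-! #### The sphere has finite 2-dimensional Hausdorff measure -/

def sphMap (p : Fin 2 → ℝ) : E3 :=
  (WithLp.equiv 2 (Fin 3 → ℝ)).symm ![Real.sin (p 0) * Real.cos (p 1),
      Real.sin (p 0) * Real.sin (p 1), Real.cos (p 0)]

lemma sin_lip (x y : ℝ) : |Real.sin x - Real.sin y| ≤ |x - y| := by
  rw [Real.sin_sub_sin, abs_mul, abs_mul]
  have h1 : |Real.sin ((x - y)/2)| ≤ |(x-y)/2| := Real.abs_sin_le_abs
  have h2 : |Real.cos ((x + y)/2)| ≤ 1 := Real.abs_cos_le_one _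
  have h3 : |(x-y)/2| = |x - y|/2 := by rw [abs_div]; norm_num
  calc |2| * |Real.sin ((x-y)/2)| * |Real.cos ((x+y)/2)| ≤ |2| * (|x - y|/2) * 1 := by
        rw [← h3]; gcongr
    _ = |x - y| := by rw [abs_two]; ring

lemma cos_lip (x y : ℝ) : |Real.cos x - Real.cos y| ≤ |x - y| := by
  rw [Real.cos_sub_cos, abs_mul, abs_mul, abs_neg]
  have h1 : |Real.sin ((x - y)/2)| ≤ |(x-y)/2| := Real.abs_sin_le_abs
  have h2 : |Real.sin ((x + y)/2)| ≤ 1 := Real.abs_sin_le_one _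
  have h3 : |(x-y)/2| = |x - y|/2 := by rw [abs_div]; norm_num
  calc |2| * |Real.sin ((x+y)/2)| * |Real.sin ((x-y)/2)| ≤ |2| * 1 * (|x - y|/2) := by
        rw [← h3]; gcongr
    _ = |x - y| := by rw [abs_two]; ring

lemma prod_diff_bound {a b c d : ℝ} (ha : |a| ≤ 1) (hd : |d| ≤ 1) :
    |a * c - b * d| ≤ |c - d| + |a - b| := by
  have h : a * c - b * d = a * (c - d) + (a - b) * d := by ring
  rw [h]
  calc |a * (c - d) + (a - b) * d| ≤ |a * (c-d)| + |(a-b)*d| := abs_add_le _ _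
    _ ≤ |c - d| + |a - b| := by
        rw [abs_mul, abs_mul]
        gcongr <;> nlinarith [abs_nonneg (c-d), abs_nonneg (a-b)]

lemma sphMap_lipschitz : LipschitzWith 4 sphMap := by
  apply LipschitzWith.of_dist_le_mul
  intro p q
  have hb : ∀ i, |sphMap p i - sphMap q i| ≤ 2 * dist p q := by
    have h0 : |p 0 - q 0| ≤ dist p q := by
      rw [← Real.dist_eq]; exact dist_le_pi_dist p q 0
    have h1 : |p 1 - q 1| ≤ dist p q := by
      rw [← Real.dist_eq]; exact dist_le_pi_dist p q 1
    intro i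
    fin_cases i
    · show |Real.sin (p 0) * Real.cos (p 1) - Real.sin (q 0) * Real.cos (q 1)| ≤ _
      calc |Real.sin (p 0) * Real.cos (p 1) - Real.sin (q 0) * Real.cos (q 1)|
          ≤ |Real.cos (p 1) - Real.cos (q 1)| + |Real.sin (p 0) - Real.sin (q 0)| :=
            prod_diff_bound (Real.abs_sin_le_one _) (Real.abs_cos_le_one _)
        _ ≤ |p 1 - q 1| + |p 0 - q 0| := add_le_add (cos_lip _ _) (sin_lip _ _)
        _ ≤ 2 * dist p q := by linarith
    · show |Real.sin (p 0) * Real.sin (p 1) - Real.sin (q 0) * Real.sin (q 1)| ≤ _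
      calc |Real.sin (p 0) * Real.sin (p 1) - Real.sin (q 0) * Real.sin (q 1)|
          ≤ |Real.sin (p 1) - Real.sin (q 1)| + |Real.sin (p 0) - Real.sin (q 0)| :=
            prod_diff_bound (Real.abs_sin_le_one _) (Real.abs_sin_le_one _)
        _ ≤ |p 1 - q 1| + |p 0 - q 0| := add_le_add (sin_lip _ _) (sin_lip _ _)
        _ ≤ 2 * dist p q := by linarith
    · show |Real.cos (p 0) - Real.cos (q 0)| ≤ _
      calc |Real.cos (p 0) - Real.cos (q 0)| ≤ |p 0 - q 0| := cos_lip _ _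
        _ ≤ 2 * dist p q := by nlinarith [dist_nonneg (x := p) (y := q)]
  have hdist : dist (sphMap p) (sphMap q) = Real.sqrt (∑ i, (sphMap p i - sphMap q i)^2) := by
    rw [EuclideanSpace.dist_eq]; simp [Real.dist_eq]
  rw [hdist]
  have hd : (0:ℝ) ≤ dist p q := dist_nonneg
  have hsum : ∑ i, (sphMap p i - sphMap q i)^2 ≤ (4 * dist p q)^2 := by
    rw [Fin.sum_univ_three]
    have e0 := hb 0; have e1 := hb 1; have e2 := hb 2
    have s0 := sq_abs (sphMap p 0 - sphMap q 0)
    have s1 := sq_abs (sphMap p 1 - sphMap q 1)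
    have s2 := sq_abs (sphMap p 2 - sphMap q 2)
    nlinarith [abs_nonneg (sphMap p 0 - sphMap q 0), abs_nonneg (sphMap p 1 - sphMap q 1),
      abs_nonneg (sphMap p 2 - sphMap q 2)]
  have h4 : ((4:NNReal):ℝ) = (4:ℝ) := by norm_num
  rw [h4]
  calc Real.sqrt (∑ i, (sphMap p i - sphMap q i)^2) ≤ Real.sqrt ((4 * dist p q)^2) :=
        Real.sqrt_le_sqrt hsum
    _ = 4 * dist p q := Real.sqrt_sq (by positivity)

lemma sphere_sum_sq {y : E3} (hy : y ∈ Metric.sphere (0:E3) 1) :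
    y 0 ^ 2 + y 1 ^ 2 + y 2 ^ 2 = 1 := by
  have h : ‖y‖ = 1 := by simpa using mem_sphere_zero_iff_norm.mp hy
  have h2 : ‖y‖ = Real.sqrt (∑ i, ‖y i‖ ^ 2) := EuclideanSpace.norm_eq y
  rw [h] at h2
  have h3 : ∑ i, ‖y i‖ ^ 2 = y 0 ^2 + y 1 ^2 + y 2^2 := by
    rw [Fin.sum_univ_three]; simp [sq_abs]
  rw [h3] at h2
  have h4 : (0:ℝ) ≤ y 0 ^2 + y 1 ^2 + y 2^2 := by positivity
  nlinarith [Real.sq_sqrt h4]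

lemma sphere_subset_image :
    Metric.sphere (0:E3) 1 ⊆ sphMap '' (Metric.closedBall 0 7) := by
  intro y hy
  have hsum := sphere_sum_sq hy
  set y2 := y 2 with hy2
  have hy2le : y2 ^ 2 ≤ 1 := by nlinarith
  have hy2b : -1 ≤ y2 ∧ y2 ≤ 1 := abs_le.mp (by nlinarith [abs_nonneg y2, sq_abs y2] : |y2| ≤ 1)
  set θ := Real.arccos y2 with hθ
  have hcθ : Real.cos θ = y2 := Real.cos_arccos hy2b.1 hy2b.2
  have hsθ : Real.sin θ = Real.sqrt (1 - y2^2) := by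
    rw [hθ, Real.sin_arccos]
  set s := Real.sqrt (1 - y2^2) with hs
  have hs0 : 0 ≤ s := Real.sqrt_nonneg _
  have hss : s ^ 2 = y 0 ^2 + y 1 ^2 := by
    rw [hs, Real.sq_sqrt (by nlinarith)]; linarith
  have hθmem : θ ∈ Set.Icc (0:ℝ) π := ⟨Real.arccos_nonneg _, Real.arccos_le_pi _⟩
  have hπ7 : π ≤ 7 := by linarith [Real.pi_le_four]
  rcases eq_or_lt_of_le hs0 with hszero | hspos
  · have h0 : y 0 = 0 := by nlinarith
    have h1 : y 1 = 0 := by nlinarith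
    refine ⟨![θ, 0], ?_, ?_⟩
    · rw [Metric.mem_closedBall, dist_pi_le_iff (by norm_num)]
      intro i; fin_cases i <;> simp [Real.dist_eq] <;>
        rw [abs_of_nonneg hθmem.1] <;> linarith [hθmem.2]
    · ext i
      fin_cases i <;>
        simp [sphMap, hsθ, ← hszero, hcθ, h0, h1, hy2]
  · set a := y 0 / s with ha
    set b := y 1 / s with hb
    have hab : a^2 + b^2 = 1 := by
      rw [ha, hb, div_pow, div_pow, ← add_div, ← hss,
        div_self (pow_ne_zero 2 (ne_of_gt hspos))]
    have hab1 : -1 ≤ a ∧ a ≤ 1 := abs_le.mp (by nlinarith [abs_nonneg a, sq_abs a] : |a| ≤ 1)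
    set φ := if 0 ≤ b then Real.arccos a else -Real.arccos a with hφ
    have hcφ : Real.cos φ = a := by
      rw [hφ]; split_ifs <;> simp [Real.cos_arccos hab1.1 hab1.2]
    have hsφ : Real.sin φ = b := by
      have hsq : Real.sqrt (1 - a^2) = |b| := by
        rw [show 1 - a^2 = b^2 by linarith, Real.sqrt_sq_eq_abs]
      rw [hφ]
      split_ifs with h
      · rw [Real.sin_arccos, hsq, abs_of_nonneg h]
      · rw [Real.sin_neg, Real.sin_arccos, hsq, abs_of_neg (not_le.mp h)]; ring
    refine ⟨![θ, φ], ?_, ?_⟩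
    · rw [Metric.mem_closedBall, dist_pi_le_iff (by norm_num)]
      intro i
      have hφb : |φ| ≤ π := by
        rw [hφ]; split_ifs
        · rw [abs_of_nonneg (Real.arccos_nonneg a)]; exact Real.arccos_le_pi a
        · rw [abs_neg, abs_of_nonneg (Real.arccos_nonneg a)]; exact Real.arccos_le_pi a
      fin_cases i <;> simp [Real.dist_eq]
      · rw [abs_of_nonneg hθmem.1]; linarith [hθmem.2]
      · linarith [hφb]
    · ext i
      have e0 : s * a = y 0 := by rw [ha]; field_simp
      have e1 : s * b = y 1 := by rw [hb]; field_simp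
      fin_cases i <;>
        simp [sphMap, hsθ, ← hs, hcφ, hsφ, hcθ, e0, e1, hy2]

lemma sphere_hausdorff_ne_top : μH[(2:ℝ)] (Metric.sphere (0:E3) 1) ≠ ⊤ := by
  have h1 : μH[(2:ℝ)] (Metric.sphere (0:E3) 1) ≤ μH[(2:ℝ)] (sphMap '' (Metric.closedBall 0 7)) :=
    measure_mono sphere_subset_image
  have h2 := sphMap_lipschitz.hausdorffMeasure_image_le (show (0:ℝ) ≤ 2 by norm_num)
    (Metric.closedBall 0 7)
  have h3 : μH[(2:ℝ)] (Metric.closedBall (0 : Fin 2 → ℝ) 7) =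
      volume (Metric.closedBall (0 : Fin 2 → ℝ) 7) := by
    have h := hausdorffMeasure_pi_real (ι := Fin 2)
    rw [show ((Fintype.card (Fin 2) : ℝ)) = (2:ℝ) by simp] at h
    rw [h]
  have h4 : volume (Metric.closedBall (0 : Fin 2 → ℝ) 7) ≠ ⊤ :=
    (isCompact_closedBall 0 7).measure_lt_top.ne
  have h5 : ((4:NNReal):ENNReal) ^ (2:ℝ) ≠ ⊤ :=
    ENNReal.rpow_ne_top_of_nonneg (by norm_num) (by simp)
  have h6 : μH[(2:ℝ)] (Metric.sphere (0:E3) 1) < ⊤ := by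
    refine lt_of_le_of_lt (h1.trans h2) ?_
    rw [h3]
    exact ENNReal.mul_lt_top (h5.lt_top) (h4.lt_top)
  exact h6.ne

lemma sphere_measurableSet : MeasurableSet (Metric.sphere (0:E3) 1) :=
  (Metric.isClosed_sphere).measurableSet

lemma integrableOn_sphere {f : E3 → ℝ} (hf : Continuous f) :
    IntegrableOn f (Metric.sphere (0:E3) 1) (μH[2]) := by
  obtain ⟨C, hC⟩ := (isCompact_sphere (0:E3) 1).exists_bound_of_continuousOn hf.continuousOn
  refine Measure.integrableOn_of_bounded (M := C) sphere_hausdorff_ne_top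
    hf.aestronglyMeasurable ?_
  exact (ae_restrict_iff' sphere_measurableSet).mpr (Eventually.of_forall hC)

/-! #### Symmetry and moments -/

lemma setIntegral_sphere_comp_isometry (e : E3 ≃ₗᵢ[ℝ] E3) (f : E3 → ℝ) :
    ∫ y in Metric.sphere (0:E3) 1, f (e y) ∂(μH[2]) =
      ∫ y in Metric.sphere (0:E3) 1, f y ∂(μH[2]) := by
  have hpre : e ⁻¹' (Metric.sphere (0:E3) 1) = Metric.sphere (0:E3) 1 := by
    ext y
    simp only [Set.mem_preimage, Metric.mem_sphere, dist_zero_right]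
    rw [e.norm_map]
  have hmp : MeasurePreserving e (μH[(2:ℝ)]) (μH[(2:ℝ)]) :=
    e.toIsometryEquiv.measurePreserving_hausdorffMeasure 2
  have hemb : MeasurableEmbedding e :=
    e.toIsometryEquiv.toHomeomorph.measurableEmbedding
  calc ∫ y in Metric.sphere (0:E3) 1, f (e y) ∂(μH[2])
      = ∫ y in e ⁻¹' (Metric.sphere (0:E3) 1), f (e y) ∂(μH[2]) := by rw [hpre]
    _ = ∫ y in Metric.sphere (0:E3) 1, f y ∂(μH[2]) :=
        hmp.setIntegral_preimage_emb hemb f _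

def reflIso (i : Fin 3) : E3 ≃ₗᵢ[ℝ] E3 :=
  LinearIsometryEquiv.piLpCongrRight 2
    (fun k => if k = i then LinearIsometryEquiv.neg ℝ else LinearIsometryEquiv.refl ℝ ℝ)

lemma reflIso_apply (i k : Fin 3) (y : E3) :
    reflIso i y k = if k = i then -(y k) else y k := by
  simp only [reflIso, LinearIsometryEquiv.piLpCongrRight_apply]
  by_cases h : k = i
  · subst h; simp
  · simp [h]

def swapIso (i k : Fin 3) : E3 ≃ₗᵢ[ℝ] E3 :=
  LinearIsometryEquiv.piLpCongrLeft 2 ℝ ℝ (Equiv.swap i k)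

lemma swapIso_apply (i k m : Fin 3) (y : E3) :
    swapIso i k y m = y (Equiv.swap i k m) := by
  simp only [swapIso, LinearIsometryEquiv.piLpCongrLeft_apply]
  rw [Equiv.piCongrLeft'_apply, Equiv.symm_swap]

lemma moment_eq_zero (i j : Fin 3) :
    ∫ y in Metric.sphere (0:E3) 1,
      (3 * (y i * y j) - if i = j then (1:ℝ) else 0) ∂(μH[2]) = 0 := by
  have hcont : ∀ k m : Fin 3, Continuous fun y : E3 => y k * y m := by
    intro k m
    exact ((EuclideanSpace.proj k).continuous.mul ((EuclideanSpace.proj m)).continuous)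
  by_cases hij : i = j
  · subst hij
    have hone : (fun y : E3 => (3:ℝ) * (y i * y i) - if i = i then (1:ℝ) else 0)
        = fun y : E3 => 3 * (y i * y i) - 1 := by funext y; simp
    rw [hone]
    have hswap : ∀ k : Fin 3,
        (∫ y in Metric.sphere (0:E3) 1, y k * y k ∂(μH[2])) =
          ∫ y in Metric.sphere (0:E3) 1, y i * y i ∂(μH[2]) := by
      intro k
      have h := setIntegral_sphere_comp_isometry (swapIso i k) (fun y => y i * y i)
      have h2 : ∀ y : E3, (swapIso i k y) i * (swapIso i k y) i = y k * y k := by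
        intro y; rw [swapIso_apply, Equiv.swap_apply_left]
      simp only [h2] at h
      exact h
    have hsum : (∫ y in Metric.sphere (0:E3) 1,
        (y 0 * y 0 + y 1 * y 1 + y 2 * y 2) ∂(μH[2])) =
          ∫ y in Metric.sphere (0:E3) 1, (1:ℝ) ∂(μH[2]) := by
      refine setIntegral_congr_fun sphere_measurableSet ?_
      intro y hy
      have h := sphere_sum_sq hy
      simp only []
      nlinarith [h]
    rw [integral_add ((integrableOn_sphere ((hcont 0 0).add (hcont 1 1))).congr_fun ?e1
      sphere_measurableSet) (integrableOn_sphere (hcont 2 2))] at hsum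
    case e1 => intro y _; rfl
    rw [integral_add (integrableOn_sphere (hcont 0 0)) (integrableOn_sphere (hcont 1 1))] at hsum
    rw [hswap 0, hswap 1, hswap 2] at hsum
    rw [integral_sub (Integrable.const_mul (integrableOn_sphere (hcont i i)) 3)
      (integrableOn_const sphere_hausdorff_ne_top),
      integral_const_mul]
    linarith
  · simp only [if_neg hij, sub_zero]
    have h := setIntegral_sphere_comp_isometry (reflIso i) (fun y => y i * y j)
    have h2 : ∀ y : E3, (reflIso i y) i * (reflIso i y) j = -(y i * y j) := by
      intro y
      rw [reflIso_apply, reflIso_apply, if_pos rfl, if_neg (fun hc => hij hc.symm)]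
      ring
    simp only [h2] at h
    rw [integral_neg] at h
    have hz : (∫ y in Metric.sphere (0:E3) 1, y i * y j ∂(μH[2])) = 0 := by linarith
    rw [integral_const_mul, hz, mul_zero]

/-! #### Differentiation under the integral sign -/

lemma hasDerivAt_sphere_integral {W : Type*} [NormedAddCommGroup W] [NormedSpace ℝ W]
    (ψ : E3 → W) (hψ : ContDiff ℝ (⊤ : ℕ∞) ψ) (hsupp : HasCompactSupport ψ)
    (g : E3 → W →L[ℝ] ℝ) (hg : Continuous g) (r₀ : ℝ) :
    HasDerivAt (fun r => ∫ y in Metric.sphere (0:E3) 1, g y (ψ (r • y)) ∂(μH[2]))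
      (∫ y in Metric.sphere (0:E3) 1, g y ((fderiv ℝ ψ (r₀ • y)) y) ∂(μH[2])) r₀ := by
  obtain ⟨M, hM⟩ := (isCompact_sphere (0:E3) 1).exists_bound_of_continuousOn hg.continuousOn
  have hχc : Continuous (fderiv ℝ ψ) := (hψ.fderiv_right (m := (⊤ : ℕ∞)) (by simp)).continuous
  obtain ⟨C1, hC1⟩ := hχc.bounded_above_of_compact_support (hsupp.fderiv (𝕜 := ℝ))
  have hsmul : ∀ (x : ℝ), Continuous fun y : E3 => x • y := fun x => continuous_id.const_smul x
  have key := hasDerivAt_integral_of_dominated_loc_of_deriv_le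
    (μ := (μH[2]).restrict (Metric.sphere (0:E3) 1))
    (F := fun x (y : E3) => g y (ψ (x • y)))
    (F' := fun x (y : E3) => g y ((fderiv ℝ ψ (x • y)) y))
    (x₀ := r₀) (s := Metric.ball r₀ 1) (bound := fun _ => M * C1)
    (Metric.ball_mem_nhds r₀ one_pos)
    (Eventually.of_forall fun x =>
      (hg.clm_apply (hψ.continuous.comp (hsmul x))).aestronglyMeasurable)
    (integrableOn_sphere (hg.clm_apply (hψ.continuous.comp (hsmul r₀))))
    ((hg.clm_apply ((hχc.comp (hsmul r₀)).clm_apply continuous_id)).aestronglyMeasurable)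
    ?_ ?_ ?_
  · exact key.2
  · rw [ae_restrict_iff' sphere_measurableSet]
    refine Eventually.of_forall fun y hy x _ => ?_
    have hy1 : ‖y‖ = 1 := by simpa using mem_sphere_zero_iff_norm.mp hy
    have h1 : ‖(fderiv ℝ ψ (x • y)) y‖ ≤ C1 * 1 := by
      have h := (fderiv ℝ ψ (x • y)).le_opNorm y
      rw [hy1] at h
      exact h.trans (mul_le_mul_of_nonneg_right (hC1 _) zero_le_one)
    have h2 : ‖g y‖ ≤ M := hM y hy
    have h3 : (0:ℝ) ≤ ‖g y‖ := norm_nonneg _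
    calc ‖g y ((fderiv ℝ ψ (x • y)) y)‖ ≤ ‖g y‖ * ‖(fderiv ℝ ψ (x • y)) y‖ := (g y).le_opNorm _
      _ ≤ M * (C1 * 1) := mul_le_mul h2 h1 (norm_nonneg _) (h3.trans h2)
      _ = M * C1 := by ring
  · exact integrableOn_const sphere_hausdorff_ne_top
  · refine Eventually.of_forall fun y x _ => ?_
    have h1 : HasDerivAt (fun x : ℝ => x • y) y x := by
      simpa using (hasDerivAt_id x).smul_const y
    have h2 : HasDerivAt (fun x : ℝ => ψ (x • y)) ((fderiv ℝ ψ (x • y)) y) x :=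
      (hψ.differentiable (by simp) (x • y)).hasFDerivAt.comp_hasDerivAt x h1
    exact (g y).hasFDerivAt.comp_hasDerivAt x h2

/-! #### The basic parametric integrals -/

def P0 (ψ c : E3 → ℝ) (r : ℝ) : ℝ :=
  ∫ y in Metric.sphere (0:E3) 1, c y * ψ (r • y) ∂(μH[2])
def P1 (ψ c : E3 → ℝ) (r : ℝ) : ℝ :=
  ∫ y in Metric.sphere (0:E3) 1, c y * ((fderiv ℝ ψ (r • y)) y) ∂(μH[2])
def P2 (ψ c : E3 → ℝ) (r : ℝ) : ℝ :=
  ∫ y in Metric.sphere (0:E3) 1, c y * (((fderiv ℝ (fderiv ℝ ψ) (r • y)) y) y) ∂(μH[2])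

variable {ψ c : E3 → ℝ}

lemma hasDerivAt_P0 (hψ : ContDiff ℝ (⊤ : ℕ∞) ψ) (hsupp : HasCompactSupport ψ)
    (hc : Continuous c) (r : ℝ) : HasDerivAt (P0 ψ c) (P1 ψ c r) r := by
  have h := hasDerivAt_sphere_integral ψ hψ hsupp
    (fun y => c y • ContinuousLinearMap.id ℝ ℝ) (hc.smul continuous_const) r
  simp only [ContinuousLinearMap.smul_apply, ContinuousLinearMap.id_apply, smul_eq_mul] at h
  exact h

lemma hasDerivAt_P1 (hψ : ContDiff ℝ (⊤ : ℕ∞) ψ) (hsupp : HasCompactSupport ψ)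
    (hc : Continuous c) (r : ℝ) : HasDerivAt (P1 ψ c) (P2 ψ c r) r := by
  have h := hasDerivAt_sphere_integral (fderiv ℝ ψ) (hψ.fderiv_right (m := (⊤ : ℕ∞)) (by simp))
    (hsupp.fderiv (𝕜 := ℝ))
    (fun y => c y • ContinuousLinearMap.apply ℝ ℝ y)
    (hc.smul (ContinuousLinearMap.apply ℝ ℝ).continuous) r
  simp only [ContinuousLinearMap.smul_apply, ContinuousLinearMap.apply_apply, smul_eq_mul] at h
  exact h

/-! #### Bounds -/

def sA : ℝ := (μH[(2:ℝ)] (Metric.sphere (0:E3) 1)).toReal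

lemma sA_nonneg : 0 ≤ sA := ENNReal.toReal_nonneg

lemma abs_coord_le_norm (y : E3) (i : Fin 3) : |y i| ≤ ‖y‖ := by
  have h : ‖y‖ = Real.sqrt (∑ k, ‖y k‖ ^ 2) := EuclideanSpace.norm_eq y
  rw [h, show |y i| = Real.sqrt (‖y i‖^2) by rw [Real.sqrt_sq_eq_abs]; simp [abs_abs]]
  apply Real.sqrt_le_sqrt
  exact Finset.single_le_sum (f := fun k => ‖y k‖^2) (fun k _ => by positivity) (Finset.mem_univ i)

lemma setint_bound {f : E3 → ℝ} {C : ℝ} (hC : ∀ y ∈ Metric.sphere (0:E3) 1, |f y| ≤ C) :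
    |∫ y in Metric.sphere (0:E3) 1, f y ∂(μH[2])| ≤ C * sA := by
  have h := norm_setIntegral_le_of_norm_le_const (μ := μH[(2:ℝ)])
    (s := Metric.sphere (0:E3) 1) (f := f) (C := C)
    sphere_hausdorff_ne_top.lt_top (fun x hx => hC x hx)
  simpa [sA, Measure.real] using h

lemma P1_bound {C1 : ℝ} (hC1 : ∀ x, ‖fderiv ℝ ψ x‖ ≤ C1)
    (hc1 : ∀ y ∈ Metric.sphere (0:E3) 1, |c y| ≤ 1) (r : ℝ) :
    |P1 ψ c r| ≤ C1 * sA := by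
  refine setint_bound ?_
  intro y hy
  have hy1 : ‖y‖ = 1 := by simpa using mem_sphere_zero_iff_norm.mp hy
  have h1 : ‖(fderiv ℝ ψ (r • y)) y‖ ≤ C1 := by
    have h := (fderiv ℝ ψ (r • y)).le_opNorm y
    rw [hy1, mul_one] at h
    exact h.trans (hC1 _)
  have h0 : (0:ℝ) ≤ C1 := (norm_nonneg _).trans (hC1 0)
  rw [abs_mul]
  calc |c y| * |(fderiv ℝ ψ (r • y)) y| ≤ 1 * C1 :=
        mul_le_mul (hc1 y hy) h1 (abs_nonneg _) zero_le_one
    _ = C1 := one_mul _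

lemma P2_bound {C2 : ℝ} (hC2 : ∀ x, ‖fderiv ℝ (fderiv ℝ ψ) x‖ ≤ C2)
    (hc1 : ∀ y ∈ Metric.sphere (0:E3) 1, |c y| ≤ 1) (r : ℝ) :
    |P2 ψ c r| ≤ C2 * sA := by
  refine setint_bound ?_
  intro y hy
  have hy1 : ‖y‖ = 1 := by simpa using mem_sphere_zero_iff_norm.mp hy
  have h0 : (0:ℝ) ≤ C2 := (norm_nonneg (fderiv ℝ (fderiv ℝ ψ) 0)).trans (hC2 0)
  have h1 : ‖((fderiv ℝ (fderiv ℝ ψ) (r • y)) y) y‖ ≤ C2 := by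
    have ha := ((fderiv ℝ (fderiv ℝ ψ) (r • y)) y).le_opNorm y
    have hb := (fderiv ℝ (fderiv ℝ ψ) (r • y)).le_opNorm y
    rw [hy1, mul_one] at ha hb
    exact ha.trans (hb.trans (hC2 _))
  rw [abs_mul]
  calc |c y| * |((fderiv ℝ (fderiv ℝ ψ) (r • y)) y) y| ≤ 1 * C2 :=
        mul_le_mul (hc1 y hy) h1 (abs_nonneg _) zero_le_one
    _ = C2 := one_mul _

lemma cancel_bound (hψ : ContDiff ℝ (⊤ : ℕ∞) ψ) {C1 : ℝ} (hC1 : ∀ x, ‖fderiv ℝ ψ x‖ ≤ C1)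
    (i j : Fin 3) {r : ℝ} (hr : 0 < r) :
    |3 * P0 ψ (fun y => y i * y j) r - (if i = j then (1:ℝ) else 0) * P0 ψ (fun _ => 1) r|
      ≤ (4 * max C1 0 * sA) * r := by
  set δ : ℝ := if i = j then (1:ℝ) else 0 with hδ
  set L : ℝ := max C1 0 with hL
  have hδ1 : |δ| ≤ 1 := by rw [hδ]; split_ifs <;> norm_num
  have hLip : LipschitzWith (Real.toNNReal C1) ψ := by
    apply lipschitzWith_of_nnnorm_fderiv_le (hψ.differentiable (by simp))
    intro x
    have h1 := hC1 x
    rw [← NNReal.coe_le_coe, coe_nnnorm, Real.coe_toNNReal']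
    exact h1.trans (le_max_left _ _)
  have hψdist : ∀ y ∈ Metric.sphere (0:E3) 1, |ψ (r • y) - ψ 0| ≤ L * r := by
    intro y hy
    have hy1 : ‖y‖ = 1 := by simpa using mem_sphere_zero_iff_norm.mp hy
    have h := hLip.dist_le_mul (r • y) 0
    rw [Real.dist_eq, dist_zero_right, norm_smul, hy1, Real.coe_toNNReal'] at h
    simpa [abs_of_pos hr, hL] using h
  have hcont : Continuous fun y : E3 => y i * y j :=
    (EuclideanSpace.proj i).continuous.mul (EuclideanSpace.proj j).continuous
  have hsm : ∀ (s : ℝ), Continuous fun y : E3 => ψ (s • y) :=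
    fun s => hψ.continuous.comp (continuous_id.const_smul s)
  have e1 : 3 * P0 ψ (fun y => y i * y j) r - δ * P0 ψ (fun _ => 1) r
      = ∫ y in Metric.sphere (0:E3) 1, (3 * (y i * y j) - δ) * ψ (r • y) ∂(μH[2]) := by
    rw [P0, P0]
    rw [show (fun y : E3 => (3 * (y i * y j) - δ) * ψ (r • y))
        = fun y : E3 => 3 * ((fun y : E3 => y i * y j) y * ψ (r • y))
            - δ * ((fun _ : E3 => (1:ℝ)) y * ψ (r • y)) from funext fun y => by ring]
    rw [integral_sub (Integrable.const_mul (integrableOn_sphere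
        (f := fun y : E3 => (fun y : E3 => y i * y j) y * ψ (r • y)) (hcont.mul (hsm r))) 3)
      (Integrable.const_mul (integrableOn_sphere
        (f := fun y : E3 => (fun _ : E3 => (1:ℝ)) y * ψ (r • y)) ((continuous_const.mul (hsm r)))) δ)]
    simp only [integral_const_mul, one_mul]
  have e2 : (∫ y in Metric.sphere (0:E3) 1, (3 * (y i * y j) - δ) * ψ (r • y) ∂(μH[2]))
      = ∫ y in Metric.sphere (0:E3) 1, (3 * (y i * y j) - δ) * (ψ (r • y) - ψ 0) ∂(μH[2]) := by
    have hint1 : IntegrableOn (fun y : E3 => (3 * (y i * y j) - δ) * ψ (r • y))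
        (Metric.sphere (0:E3) 1) (μH[2]) :=
      integrableOn_sphere (((continuous_const.mul hcont).sub continuous_const).mul (hsm r))
    have hint2 : IntegrableOn (fun y : E3 => (3 * (y i * y j) - δ) * ψ 0)
        (Metric.sphere (0:E3) 1) (μH[2]) :=
      integrableOn_sphere (((continuous_const.mul hcont).sub continuous_const).mul
        continuous_const)
    rw [show (fun y : E3 => (3 * (y i * y j) - δ) * (ψ (r • y) - ψ 0))
        = fun y : E3 => (3 * (y i * y j) - δ) * ψ (r • y) - (3 * (y i * y j) - δ) * ψ 0
        from funext fun y => by ring]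
    rw [integral_sub hint1 hint2, integral_mul_const, moment_eq_zero i j, zero_mul, sub_zero]
  rw [e1, e2]
  have hb : ∀ y ∈ Metric.sphere (0:E3) 1,
      |(3 * (y i * y j) - δ) * (ψ (r • y) - ψ 0)| ≤ (4 * L) * r := by
    intro y hy
    have hy1 : ‖y‖ = 1 := by simpa using mem_sphere_zero_iff_norm.mp hy
    have hyi : |y i| ≤ 1 := by rw [← hy1]; exact abs_coord_le_norm y i
    have hyj : |y j| ≤ 1 := by rw [← hy1]; exact abs_coord_le_norm y j
    have h4 : |3 * (y i * y j) - δ| ≤ 4 := by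
      have h3a : |3 * (y i * y j)| ≤ 3 := by
        rw [abs_mul, abs_mul, abs_of_nonneg (by norm_num : (0:ℝ) ≤ 3)]
        nlinarith [abs_nonneg (y i), abs_nonneg (y j)]
      calc |3 * (y i * y j) - δ| ≤ |3 * (y i * y j)| + |δ| := abs_sub _ _
        _ ≤ 4 := by linarith
    rw [abs_mul]
    have hL0 : 0 ≤ L := le_max_right _ _
    have h := hψdist y hy
    nlinarith [abs_nonneg (3 * (y i * y j) - δ), abs_nonneg (ψ (r • y) - ψ 0)]
  calc |∫ y in Metric.sphere (0:E3) 1, (3 * (y i * y j) - δ) * (ψ (r • y) - ψ 0) ∂(μH[2])|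
      ≤ ((4 * L) * r) * sA := setint_bound hb
    _ = (4 * L * sA) * r := by ring

end SigmaAux

open SigmaAux

/-- the improper integral defining the distribution `σᵢⱼ(T)`
converges: `r ↦ (1/r) d/dr[(1/r) F'(r) - G(r)]` is integrable on `(0, T]`. -/
theorem sigma_ij_integral_converges (ψ : E3 → ℝ)
    (hψ : ContDiff ℝ (⊤ : ℕ∞) ψ) (hsupp : HasCompactSupport ψ)
    (i j : Fin 3) (T : ℝ) (hT : 0 < T) :
    IntegrableOn
      (fun r : ℝ => r⁻¹ * deriv (fun s => s⁻¹ * deriv (Ffun ψ i j) s - Gfun ψ i j s) r)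
      (Set.Ioc 0 T) := by
  classical
  set cij : E3 → ℝ := fun y => y i * y j with hcij
  set one : E3 → ℝ := fun _ => (1:ℝ) with hone
  have hcontij : Continuous cij :=
    (EuclideanSpace.proj i).continuous.mul (EuclideanSpace.proj j).continuous
  have hcont1 : Continuous one := continuous_const
  -- bounds on derivatives of ψ
  obtain ⟨C1, hC1⟩ := ((hψ.fderiv_right (m := (⊤ : ℕ∞)) (by simp)).continuous).bounded_above_of_compact_support
    (hsupp.fderiv (𝕜 := ℝ))
  obtain ⟨C2, hC2⟩ :=
    (((hψ.fderiv_right (m := (⊤ : ℕ∞)) (by simp)).fderiv_right (m := (⊤ : ℕ∞)) (by simp)).continuous).bounded_above_of_compact_support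
    ((hsupp.fderiv (𝕜 := ℝ)).fderiv (𝕜 := ℝ))
  have hC1nn : (0:ℝ) ≤ C1 := (norm_nonneg _).trans (hC1 0)
  have hC2nn : (0:ℝ) ≤ C2 := (norm_nonneg _).trans (hC2 0)
  set δ : ℝ := if i = j then (1:ℝ) else 0 with hδ
  have hδ1 : |δ| ≤ 1 := by rw [hδ]; split_ifs <;> norm_num
  -- derivative facts
  have hP0ij : ∀ r, HasDerivAt (P0 ψ cij) (P1 ψ cij r) r :=
    hasDerivAt_P0 hψ hsupp hcontij
  have hP1ij : ∀ r, HasDerivAt (P1 ψ cij) (P2 ψ cij r) r :=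
    hasDerivAt_P1 hψ hsupp hcontij
  have hP01 : ∀ r, HasDerivAt (P0 ψ one) (P1 ψ one r) r :=
    hasDerivAt_P0 hψ hsupp hcont1
  -- Ffun and Gfun in terms of P0
  have hF : Ffun ψ i j = fun r => r ^ 3 * P0 ψ cij r := rfl
  have hG : ∀ s : ℝ, Gfun ψ i j s = δ * (s * P0 ψ one s) := by
    intro s
    rw [Gfun, hδ]
    split_ifs
    · rw [one_mul]
      congr 1
      rw [P0]
      congr 1
      funext y
      rw [hone, one_mul]
    · rw [zero_mul]
  -- the derivative of Ffun
  have hFd : ∀ s : ℝ, deriv (Ffun ψ i j) s = 3 * s ^ 2 * P0 ψ cij s + s ^ 3 * P1 ψ cij s := by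
    intro s
    rw [hF]
    have h : HasDerivAt (fun r => r ^ 3 * P0 ψ cij r) _ s := (hasDerivAt_pow 3 s).mul (hP0ij s)
    rw [h.deriv]
    push_cast
    ring
  -- the simplified function q and its derivative D
  set q : ℝ → ℝ := fun s => 3 * s * P0 ψ cij s + s ^ 2 * P1 ψ cij s - δ * (s * P0 ψ one s)
    with hqdef
  set D : ℝ → ℝ := fun s => (3 * 1 * P0 ψ cij s + 3 * s * P1 ψ cij s
      + (((2:ℕ) * s ^ 1) * P1 ψ cij s + s ^ 2 * P2 ψ cij s))
      - δ * (1 * P0 ψ one s + s * P1 ψ one s) with hDdef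
  have hq : ∀ s : ℝ, HasDerivAt q (D s) s := by
    intro s
    have h1 : HasDerivAt (fun x : ℝ => 3 * x * P0 ψ cij x)
        (3 * 1 * P0 ψ cij s + 3 * s * P1 ψ cij s) s := by
      exact (((hasDerivAt_id s).const_mul 3).mul (hP0ij s))
    have h2 : HasDerivAt (fun x : ℝ => x ^ 2 * P1 ψ cij x)
        (((2:ℕ) * s ^ 1) * P1 ψ cij s + s ^ 2 * P2 ψ cij s) s :=
      (hasDerivAt_pow 2 s).mul (hP1ij s)
    have h3 : HasDerivAt (fun x : ℝ => δ * (x * P0 ψ one x))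
        (δ * (1 * P0 ψ one s + s * P1 ψ one s)) s :=
      (((hasDerivAt_id s).mul (hP01 s)).const_mul δ)
    exact ((h1.add h2).sub h3)
  -- the inner function agrees with q on (0, ∞)
  set g : ℝ → ℝ := fun s => s⁻¹ * deriv (Ffun ψ i j) s - Gfun ψ i j s with hgdef
  have hgq : ∀ s ∈ Set.Ioi (0:ℝ), g s = q s := by
    intro s hs
    have hs0 : s ≠ 0 := ne_of_gt hs
    rw [hgdef]
    simp only []
    rw [hFd s, hG s, hqdef]
    field_simp
  have hderiv_eq : ∀ r ∈ Set.Ioi (0:ℝ), deriv g r = D r := by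
    intro r hr
    have heq : g =ᶠ[nhds r] q := eventually_of_mem (Ioi_mem_nhds hr) hgq
    rw [heq.deriv_eq]
    exact (hq r).deriv
  -- pointwise bound
  set L : ℝ := max C1 0 with hLdef
  set B : ℝ := 4 * L * sA + 5 * (C1 * sA) + T * (C2 * sA) + C1 * sA with hBdef
  have hcb : ∀ y ∈ Metric.sphere (0:E3) 1, |cij y| ≤ 1 := by
    intro y hy
    have hy1 : ‖y‖ = 1 := by simpa using mem_sphere_zero_iff_norm.mp hy
    have hyi : |y i| ≤ 1 := by rw [← hy1]; exact abs_coord_le_norm y i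
    have hyj : |y j| ≤ 1 := by rw [← hy1]; exact abs_coord_le_norm y j
    rw [hcij, abs_mul]
    nlinarith [abs_nonneg (y i), abs_nonneg (y j)]
  have h1b : ∀ y ∈ Metric.sphere (0:E3) 1, |one y| ≤ 1 := by
    intro y _; rw [hone]; norm_num
  have hbound : ∀ r ∈ Set.Ioc (0:ℝ) T,
      |r⁻¹ * deriv g r| ≤ B := by
    rintro r ⟨hr0, hrT⟩
    rw [hderiv_eq r hr0]
    have hsplit : r⁻¹ * D r = r⁻¹ * (3 * P0 ψ cij r - δ * P0 ψ one r)
        + (5 * P1 ψ cij r + r * P2 ψ cij r - δ * P1 ψ one r) := by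
      rw [hDdef]
      have hr0' : r ≠ 0 := ne_of_gt hr0
      push_cast
      field_simp
      ring
    rw [hsplit]
    have hcan := cancel_bound hψ hC1 i j hr0
    have hterm1 : |r⁻¹ * (3 * P0 ψ cij r - δ * P0 ψ one r)| ≤ 4 * L * sA := by
      rw [abs_mul, abs_of_pos (inv_pos.mpr hr0)]
      have h := mul_le_mul_of_nonneg_left hcan (le_of_lt (inv_pos.mpr hr0))
      calc r⁻¹ * |3 * P0 ψ cij r - δ * P0 ψ one r| ≤ r⁻¹ * ((4 * L * sA) * r) := h
        _ = 4 * L * sA := by field_simp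
    have hP1r := P1_bound (ψ := ψ) (c := cij) hC1 hcb r
    have hP2r := P2_bound (ψ := ψ) (c := cij) hC2 hcb r
    have hP11r := P1_bound (ψ := ψ) (c := one) hC1 h1b r
    have hterm2 : |5 * P1 ψ cij r + r * P2 ψ cij r - δ * P1 ψ one r|
        ≤ 5 * (C1 * sA) + T * (C2 * sA) + C1 * sA := by
      have ha : |5 * P1 ψ cij r| ≤ 5 * (C1 * sA) := by
        rw [abs_mul, abs_of_nonneg (by norm_num : (0:ℝ) ≤ 5)]
        linarith [mul_le_mul_of_nonneg_left hP1r (by norm_num : (0:ℝ) ≤ 5)]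
      have hb : |r * P2 ψ cij r| ≤ T * (C2 * sA) := by
        rw [abs_mul, abs_of_pos hr0]
        have h1 : r * |P2 ψ cij r| ≤ r * (C2 * sA) :=
          mul_le_mul_of_nonneg_left hP2r (le_of_lt hr0)
        have h2 : r * (C2 * sA) ≤ T * (C2 * sA) :=
          mul_le_mul_of_nonneg_right hrT (mul_nonneg hC2nn sA_nonneg)
        linarith
      have hc : |δ * P1 ψ one r| ≤ C1 * sA := by
        rw [abs_mul]
        have := mul_le_mul hδ1 hP11r (abs_nonneg _) zero_le_one
        linarith [this]
      calc |5 * P1 ψ cij r + r * P2 ψ cij r - δ * P1 ψ one r|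
          ≤ |5 * P1 ψ cij r + r * P2 ψ cij r| + |δ * P1 ψ one r| := abs_sub _ _
        _ ≤ |5 * P1 ψ cij r| + |r * P2 ψ cij r| + |δ * P1 ψ one r| := by
            linarith [abs_add_le (5 * P1 ψ cij r) (r * P2 ψ cij r)]
        _ ≤ 5 * (C1 * sA) + T * (C2 * sA) + C1 * sA := by linarith
    calc |r⁻¹ * (3 * P0 ψ cij r - δ * P0 ψ one r)
        + (5 * P1 ψ cij r + r * P2 ψ cij r - δ * P1 ψ one r)|
        ≤ |r⁻¹ * (3 * P0 ψ cij r - δ * P0 ψ one r)|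
          + |5 * P1 ψ cij r + r * P2 ψ cij r - δ * P1 ψ one r| := abs_add_le _ _
      _ ≤ B := by rw [hBdef]; linarith
  -- conclude integrability
  have hmeas : AEStronglyMeasurable (fun r : ℝ => r⁻¹ * deriv g r) volume :=
    ((measurable_id.inv).mul (measurable_deriv g)).aestronglyMeasurable
  refine Measure.integrableOn_of_bounded (M := B) (measure_Ioc_lt_top).ne hmeas ?_
  exact (ae_restrict_iff' measurableSet_Ioc).mpr (Eventually.of_forall hbound)
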